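/- Let β ≥ 0 and η ≥ 3β/2. Then for all integers k_1, k_2 ≥ 1 one has r_{k_1k_2} ≤ −Im ω_{k_1k_2} and Im ω_{k_1k_2} ≤ η/3. -/
import Mathlib


open Real

/-- The real (signed) cube root. -/
noncomputable def cbrt (x : ℝ) : ℝ := Real.sign x * |x| ^ ((1 : ℝ) / 3)

/-- `s = √(k₁² + k₂²)`. -/
noncomputable def sNorm (k₁ k₂ : ℕ) : ℝ := Real.sqrt ((k₁ : ℝ) ^ 2 + (k₂ : ℝ) ^ 2)

/-- `Φ_{k₁k₂} = √(1 + (2η² + 27β²/4 − 9ηβ)/s² + η³(η−β)/s⁴)`. -/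
noncomputable def PhiE (β η : ℝ) (k₁ k₂ : ℕ) : ℝ :=
  Real.sqrt (1 + (2 * η ^ 2 + 27 * β ^ 2 / 4 - 9 * η * β) / (sNorm k₁ k₂) ^ 2
    + η ^ 3 * (η - β) / (sNorm k₁ k₂) ^ 4)

/-- `Ψ_{k₁k₂} = η³/(3√3·s³) + (η − 3β/2)·√3/s`. -/
noncomputable def PsiE (β η : ℝ) (k₁ k₂ : ℕ) : ℝ :=
  η ^ 3 / (3 * Real.sqrt 3 * (sNorm k₁ k₂) ^ 3)
    + (η - 3 * β / 2) * Real.sqrt 3 / sNorm k₁ k₂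

/-- `Λ⁺_{k₁k₂} = (1/2)·∛(Φ + Ψ)`. -/
noncomputable def LamPE (β η : ℝ) (k₁ k₂ : ℕ) : ℝ :=
  (1 / 2) * cbrt (PhiE β η k₁ k₂ + PsiE β η k₁ k₂)

/-- `Λ⁻_{k₁k₂} = (1/2)·∛(Φ − Ψ)`. -/
noncomputable def LamME (β η : ℝ) (k₁ k₂ : ℕ) : ℝ :=
  (1 / 2) * cbrt (PhiE β η k₁ k₂ - PsiE β η k₁ k₂)

/-- `Im ω_{k₁k₂} = (1/√3)·s·(Λ⁻ − Λ⁺) + η/3`. -/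
noncomputable def ImOmegaE (β η : ℝ) (k₁ k₂ : ℕ) : ℝ :=
  (1 / Real.sqrt 3) * sNorm k₁ k₂ * (LamME β η k₁ k₂ - LamPE β η k₁ k₂) + η / 3

/-- `r_{k₁k₂} = (2/√3)·s·(Λ⁻ − Λ⁺) − η/3`. -/
noncomputable def rE (β η : ℝ) (k₁ k₂ : ℕ) : ℝ :=
  (2 / Real.sqrt 3) * sNorm k₁ k₂ * (LamME β η k₁ k₂ - LamPE β η k₁ k₂) - η / 3

lemma cbrt_mono : Monotone cbrt := by
  intro a b hab
  unfold cbrt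
  rcases lt_trichotomy a 0 with ha | ha | ha
  · rcases lt_trichotomy b 0 with hb | hb | hb
    · rw [Real.sign_of_neg ha, Real.sign_of_neg hb, abs_of_neg ha, abs_of_neg hb]
      have : -b ≤ -a := by linarith
      have h1 : (-b) ^ ((1:ℝ)/3) ≤ (-a) ^ ((1:ℝ)/3) :=
        Real.rpow_le_rpow (by linarith) this (by norm_num)
      linarith
    · subst hb
      rw [Real.sign_of_neg ha]
      simp
      positivity
    · rw [Real.sign_of_neg ha, Real.sign_of_pos hb]
      have h1 : 0 ≤ |b| ^ ((1:ℝ)/3) := Real.rpow_nonneg (abs_nonneg b) _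
      have h2 : 0 ≤ |a| ^ ((1:ℝ)/3) := Real.rpow_nonneg (abs_nonneg a) _
      linarith
  · subst ha
    rcases eq_or_lt_of_le hab with hb | hb
    · rw [← hb]
    · rw [Real.sign_of_pos hb]
      simp
      positivity
  · have hb : 0 < b := lt_of_lt_of_le ha hab
    rw [Real.sign_of_pos ha, Real.sign_of_pos hb, abs_of_pos ha, abs_of_pos hb]
    simpa using Real.rpow_le_rpow ha.le hab (by norm_num : (0:ℝ) ≤ 1/3)

lemma key (β η : ℝ) (hβ : 0 ≤ β) (hη : 3 * β / 2 ≤ η) (k₁ k₂ : ℕ) (h₁ : 1 ≤ k₁)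
    (h₂ : 1 ≤ k₂) : LamME β η k₁ k₂ - LamPE β η k₁ k₂ ≤ 0 := by
  have hs : 0 < sNorm k₁ k₂ := by
    unfold sNorm
    apply Real.sqrt_pos.mpr
    have : (1:ℝ) ≤ (k₁:ℝ) := by exact_mod_cast h₁
    nlinarith [sq_nonneg ((k₂:ℝ))]
  have hη0 : 0 ≤ η := le_trans (by linarith) hη
  have hΨ : 0 ≤ PsiE β η k₁ k₂ := by
    unfold PsiE
    have h3 : (0:ℝ) < Real.sqrt 3 := by positivity
    have : 0 ≤ η - 3 * β / 2 := by linarith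
    positivity
  have := cbrt_mono (show PhiE β η k₁ k₂ - PsiE β η k₁ k₂ ≤
    PhiE β η k₁ k₂ + PsiE β η k₁ k₂ by linarith)
  unfold LamME LamPE
  linarith

/-- for `β ≥ 0` and `η ≥ 3β/2`, one has
`r_{k₁k₂} ≤ −Im ω_{k₁k₂}` and `Im ω_{k₁k₂} ≤ η/3` for all `k₁, k₂ ≥ 1`. -/
theorem stmt_8 (β η : ℝ) (hβ : 0 ≤ β) (hη : 3 * β / 2 ≤ η) :
    ∀ k₁ k₂ : ℕ, 1 ≤ k₁ → 1 ≤ k₂ →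
      rE β η k₁ k₂ ≤ -ImOmegaE β η k₁ k₂ ∧ ImOmegaE β η k₁ k₂ ≤ η / 3 := by
  intro k₁ k₂ h₁ h₂
  have hkey := key β η hβ hη k₁ k₂ h₁ h₂
  have hs : 0 ≤ sNorm k₁ k₂ := Real.sqrt_nonneg _
  have h3 : (0:ℝ) < Real.sqrt 3 := by positivity
  have hD : sNorm k₁ k₂ * (LamME β η k₁ k₂ - LamPE β η k₁ k₂) ≤ 0 :=
    mul_nonpos_of_nonneg_of_nonpos hs hkey
  have h1 : 0 < 1 / Real.sqrt 3 := by positivity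
  have h2 : 0 < 2 / Real.sqrt 3 := by positivity
  unfold rE ImOmegaE
  constructor <;> nlinarith
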